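/- arXiv:astro-ph/9903132 — 3 statements merged into one kernel-verified Lean document; each statement's English description precedes it below -/
import Mathlib

section
/- For all natural numbers n, N, i with i ≤ N ≤ n, the double sum over i1, i2 of (n - i2 choose N - i2)·(n - i1 choose i2 - i)·(N - i choose i1 - i)·(-1)^(i1 + i2) equals (-1)^(N - i), where the sum ranges over all integers i1, i2 with i ≤ i1 ≤ N and i ≤ i2 ≤ N. -/
open Finset

/-- Finite difference lemma: the M-th finite difference of `m ↦ C(m,b)`. -/
lemma diff_choose (M : ℕ) : ∀ m b : ℕ, M ≤ m →
    ∑ a ∈ range (M + 1), (-1 : ℤ) ^ a * (M.choose a) * ((m - a).choose b) =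
      if M ≤ b then ((m - M).choose (b - M) : ℤ) else 0 := by
  induction M with
  | zero =>
      intro m b _
      simp
  | succ M ih =>
      intro m b hm
      have hm' : M ≤ m - 1 := by omega
      have key : ∑ a ∈ range (M + 2), (-1 : ℤ) ^ a * ((M + 1).choose a) * ((m - a).choose b)
          = (∑ a ∈ range (M + 1), (-1 : ℤ) ^ a * (M.choose a) * ((m - a).choose b))
            - (∑ a ∈ range (M + 1), (-1 : ℤ) ^ a * (M.choose a) * ((m - 1 - a).choose b)) := by
        have expand : ∀ a ∈ range (M + 2),
            (-1 : ℤ) ^ a * ((M + 1).choose a) * ((m - a).choose b)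
              = (-1 : ℤ) ^ a * (M.choose a) * ((m - a).choose b)
                + (-1 : ℤ) ^ a * (M.choose (a - 1)) * ((m - a).choose b) * (if a = 0 then 0 else 1) := by
          intro a _
          rcases a with _ | a
          · simp
          · simp [Nat.choose_succ_succ, Nat.add_comm]
            push_cast
            ring
        rw [Finset.sum_congr rfl expand, Finset.sum_add_distrib]
        congr 1
        · -- first sum: extend/truncate: a = M+1 term vanishes since C(M, M+1) = 0
          rw [Finset.sum_range_succ]
          simp [Nat.choose_succ_self]
        · -- second sum: shift index
          rw [Finset.sum_range_succ']
          simp only [if_pos rfl, mul_zero, add_zero]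
          have : ∀ a ∈ range (M + 1),
              (-1 : ℤ) ^ (a + 1) * (M.choose (a + 1 - 1)) * ((m - (a + 1)).choose b) *
                  (if a + 1 = 0 then (0:ℤ) else 1)
                = -((-1 : ℤ) ^ a * (M.choose a) * ((m - 1 - a).choose b)) := by
            intro a _
            have : m - (a + 1) = m - 1 - a := by omega
            rw [this]
            simp only [Nat.add_sub_cancel, Nat.succ_ne_zero, if_false, mul_one, pow_succ]
            ring
          rw [Finset.sum_congr rfl this]
          simp
      rw [key, ih m b (by omega), ih (m - 1) b hm']
      rcases lt_trichotomy b M with hb | hb | hb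
      · rw [if_neg (by omega), if_neg (by omega), if_neg (by omega)]; ring
      · subst hb
        rw [if_pos le_rfl, if_pos le_rfl, if_neg (by omega)]
        simp
      · rw [if_pos (by omega), if_pos (by omega), if_pos (by omega)]
        have h1 : m - M = (m - 1 - M) + 1 := by omega
        have h2 : b - M = (b - 1 - M) + 1 := by omega
        have h3 : b - (M + 1) = b - 1 - M := by omega
        have h4 : m - (M + 1) = m - 1 - M := by omega
        rw [h1, h2, h3, h4, Nat.choose_succ_succ]
        push_cast
        ring

theorem stmt_1 (n N i : ℕ) (hiN : i ≤ N) (hNn : N ≤ n) :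
    ∑ i1 ∈ Finset.Icc i N, ∑ i2 ∈ Finset.Icc i N,
      ((n - i2).choose (N - i2) : ℤ) * ((n - i1).choose (i2 - i)) *
        ((N - i).choose (i1 - i)) * (-1) ^ (i1 + i2) =
    (-1) ^ (N - i) := by
  rw [Finset.sum_comm]
  have inner : ∀ i2 ∈ Finset.Icc i N,
      ∑ i1 ∈ Finset.Icc i N,
        ((n - i2).choose (N - i2) : ℤ) * ((n - i1).choose (i2 - i)) *
          ((N - i).choose (i1 - i)) * (-1) ^ (i1 + i2)
        = if i2 = N then (-1 : ℤ) ^ (i + N) else 0 := by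
    intro i2 hi2
    simp only [Finset.mem_Icc] at hi2
    -- reindex i1 = i + a
    have hIcc : Finset.Icc i N = Finset.map (addLeftEmbedding i) (Finset.Icc 0 (N - i)) := by
      rw [Finset.map_add_left_Icc]
      congr 1 <;> omega
    rw [hIcc, Finset.sum_map]
    simp only [addLeftEmbedding_apply]
    have h0 : Finset.Icc 0 (N - i) = Finset.range (N - i + 1) := by
      ext x; simp [Nat.lt_succ_iff]
    rw [h0]
    have step : ∀ a ∈ Finset.range (N - i + 1),
        ((n - i2).choose (N - i2) : ℤ) * ((n - (i + a)).choose (i2 - i)) *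
            ((N - i).choose (i + a - i)) * (-1) ^ (i + a + i2)
          = (((n - i2).choose (N - i2) : ℤ) * (-1) ^ (i + i2)) *
              ((-1 : ℤ) ^ a * ((N - i).choose a) * ((n - i - a).choose (i2 - i))) := by
      intro a _
      have e1 : i + a - i = a := by omega
      have e2 : n - (i + a) = n - i - a := by omega
      rw [e1, e2, pow_add, pow_add]
      ring
    rw [Finset.sum_congr rfl step, ← Finset.mul_sum,
      diff_choose (N - i) (n - i) (i2 - i) (by omega)]
    rcases eq_or_lt_of_le hi2.2 with h | h
    · subst h
      rw [if_pos le_rfl, if_pos rfl]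
      have e1 : i2 - i - (i2 - i) = 0 := by omega
      have e2 : i2 - i2 = 0 := by omega
      rw [e1, e2]
      simp
    · rw [if_neg (by omega), if_neg (by omega)]
      ring
  rw [Finset.sum_congr rfl inner, Finset.sum_ite_eq' (Finset.Icc i N) N]
  rw [if_pos (Finset.mem_Icc.mpr ⟨hiN, le_rfl⟩)]
  -- (-1)^(i+N) = (-1)^(N-i)
  have : (i + N) = (N - i) + 2 * i := by omega
  rw [this, pow_add, pow_mul]
  simp
end

section
/- For all natural numbers n, N, i with i ≤ N ≤ n, the double sum over i1, i2 (with i ≤ i1 ≤ N, i ≤ i2 ≤ N) of (N choose i1)·(N choose i2)·(i1 choose i)·(i2 choose i)·(-1)^(i1+i2)·(n - i1)!/(n - N)! · (n - i2)!/(n - N)! · n!/(n - i1 - i2 + i)! · i! equals N! · n!/(n - N)! · (N choose i)·(-1)^(N - i), where all quantities are interpreted as integers. -/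
open Polynomial Finset

private lemma descFactorial_add' (n a : ℕ) : ∀ b : ℕ,
    n.descFactorial (a + b) = n.descFactorial a * (n - a).descFactorial b
  | 0 => by simp
  | b + 1 => by
    rw [← Nat.add_assoc, Nat.descFactorial_succ, descFactorial_add' n a b,
      Nat.descFactorial_succ, Nat.sub_sub]
    ring

private lemma descPochhammer_succ_eval_left (n : ℕ) (t : ℤ) :
    (descPochhammer ℤ (n + 1)).eval t = t * (descPochhammer ℤ n).eval (t - 1) := by
  rw [descPochhammer_succ_left]
  simp [eval_comp]

private lemma key (M : ℕ) (y : ℤ) : ∀ x : ℤ,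
    ∑ j ∈ Finset.range (M + 1), (-1 : ℤ) ^ j * (M.choose j) *
      (descPochhammer ℤ j).eval y * (descPochhammer ℤ (M - j)).eval (x - j) =
    (descPochhammer ℤ M).eval (x - y) := by
  induction M with
  | zero => intro x; simp
  | succ M ih =>
    intro x
    have split : ∀ j ∈ Finset.range (M + 2),
        (-1 : ℤ) ^ j * ((M + 1).choose j) *
          (descPochhammer ℤ j).eval y * (descPochhammer ℤ (M + 1 - j)).eval (x - j) =
        ((-1 : ℤ) ^ j * (M.choose j) *
          (descPochhammer ℤ j).eval y * (descPochhammer ℤ (M + 1 - j)).eval (x - j)) +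
        ((-1 : ℤ) ^ j * ((M + 1).choose j - (M.choose j) : ℤ) *
          (descPochhammer ℤ j).eval y * (descPochhammer ℤ (M + 1 - j)).eval (x - j)) := by
      intro j _; ring
    rw [Finset.sum_congr rfl split, Finset.sum_add_distrib]
    -- first sum: last term vanishes
    rw [Finset.sum_range_succ ((fun j => (-1 : ℤ) ^ j * (M.choose j) *
          (descPochhammer ℤ j).eval y * (descPochhammer ℤ (M + 1 - j)).eval (x - j))) (M+1)]
    rw [Nat.choose_succ_self M]
    -- second sum: first term vanishes, shift index
    rw [Finset.sum_range_succ' ((fun j => (-1 : ℤ) ^ j * ((M + 1).choose j - (M.choose j) : ℤ) *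
          (descPochhammer ℤ j).eval y * (descPochhammer ℤ (M + 1 - j)).eval (x - j))) (M+1)]
    simp only [Nat.cast_zero, Nat.choose_zero_right, Nat.cast_one, sub_self, pow_zero, one_mul,
      zero_mul, mul_zero, zero_add, add_zero, Nat.cast_ofNat]
    have combine : ∀ j ∈ Finset.range (M + 1),
        ((-1 : ℤ) ^ j * (M.choose j) *
          (descPochhammer ℤ j).eval y * (descPochhammer ℤ (M + 1 - j)).eval (x - j)) +
        ((-1 : ℤ) ^ (j + 1) * (((M + 1).choose (j + 1) : ℤ) - (M.choose (j + 1))) *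
          (descPochhammer ℤ (j + 1)).eval y * (descPochhammer ℤ (M + 1 - (j + 1))).eval (x - ((j + 1 : ℕ) : ℤ))) =
        (x - y) * ((-1 : ℤ) ^ j * (M.choose j) *
          (descPochhammer ℤ j).eval y * (descPochhammer ℤ (M - j)).eval ((x - 1) - j)) := by
      intro j hj
      rw [Finset.mem_range] at hj
      have h1 : M + 1 - j = (M - j) + 1 := by omega
      have h2 : M + 1 - (j + 1) = M - j := by omega
      have h3 : ((M + 1).choose (j + 1) : ℤ) = (M.choose j) + (M.choose (j + 1)) := by
        rw [Nat.choose_succ_succ]; push_cast; ring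
      rw [h1, h2, h3, descPochhammer_succ_eval_left (M - j) (x - j),
        descPochhammer_succ_eval (j) y]
      push_cast
      have h4 : (x - ((j : ℤ) + 1)) = (x - 1) - j := by ring
      have h5 : (x - (j : ℤ)) - 1 = (x - 1) - j := by ring
      rw [h4, h5]
      ring
    rw [← Finset.sum_add_distrib, Finset.sum_congr rfl combine, ← Finset.mul_sum, ih (x - 1),
      descPochhammer_succ_eval_left]
    ring_nf

theorem stmt_2 (n N i : ℕ) (hiN : i ≤ N) (hNn : N ≤ n) :
    ∑ i1 ∈ Finset.Icc i N, ∑ i2 ∈ Finset.Icc i N,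
      (N.choose i1 : ℤ) * (N.choose i2) * (i1.choose i) * (i2.choose i) *
        (-1) ^ (i1 + i2) * ((n - i1).descFactorial (N - i1)) *
        ((n - i2).descFactorial (N - i2)) * (n.descFactorial (i1 + i2 - i)) *
        (Nat.factorial i) =
    (N.factorial : ℤ) * (n.descFactorial N) * (N.choose i) * (-1) ^ (N - i) := by
  have inner : ∀ i1 ∈ Finset.Icc i N,
      (∑ i2 ∈ Finset.Icc i N,
        (N.choose i1 : ℤ) * (N.choose i2) * (i1.choose i) * (i2.choose i) *
          (-1) ^ (i1 + i2) * ((n - i1).descFactorial (N - i1)) *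
          ((n - i2).descFactorial (N - i2)) * (n.descFactorial (i1 + i2 - i)) *
          (Nat.factorial i)) =
      ((N.choose i1 : ℤ) * (i1.choose i) * (-1) ^ i1 * ((n - i1).descFactorial (N - i1)) *
        (Nat.factorial i) * (N.choose i) * (-1) ^ i * (n.descFactorial i1)) *
        ((i1 - i).descFactorial (N - i)) := by
    intro i1 hi1
    rw [Finset.mem_Icc] at hi1
    rw [← Finset.Ico_add_one_right_eq_Icc, Finset.sum_Ico_eq_sum_range,
      show N + 1 - i = (N - i) + 1 from by omega]
    have step : ∀ j ∈ Finset.range ((N - i) + 1),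
        ((N.choose i1 : ℤ) * (N.choose (i + j)) * (i1.choose i) * ((i + j).choose i) *
          (-1) ^ (i1 + (i + j)) * ((n - i1).descFactorial (N - i1)) *
          ((n - (i + j)).descFactorial (N - (i + j))) *
          (n.descFactorial (i1 + (i + j) - i)) * (Nat.factorial i)) =
        ((N.choose i1 : ℤ) * (i1.choose i) * (-1) ^ i1 * ((n - i1).descFactorial (N - i1)) *
          (Nat.factorial i) * (N.choose i) * (-1) ^ i * (n.descFactorial i1)) *
        ((-1 : ℤ) ^ j * ((N - i).choose j) *
          (descPochhammer ℤ j).eval ((n : ℤ) - i1) *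
          (descPochhammer ℤ ((N - i) - j)).eval (((n : ℤ) - i) - j)) := by
      intro j hj
      rw [Finset.mem_range] at hj
      have hji : j ≤ N - i := by omega
      have h1 : (N.choose (i + j) : ℤ) * ((i + j).choose i) =
          (N.choose i) * ((N - i).choose j) := by
        have := Nat.choose_mul (n := N) (Nat.le_add_right i j)
        rw [show i + j - i = j from by omega] at this
        exact_mod_cast congrArg (Nat.cast : ℕ → ℤ) this
      have h2 : (((n - (i + j)).descFactorial (N - (i + j)) : ℕ) : ℤ) =
          (descPochhammer ℤ ((N - i) - j)).eval (((n : ℤ) - i) - j) := by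
        rw [show N - (i + j) = (N - i) - j from by omega,
          show ((n : ℤ) - i) - j = (((n - (i + j) : ℕ)) : ℤ) from by omega,
          descPochhammer_eval_eq_descFactorial]
      have h3 : ((n.descFactorial (i1 + (i + j) - i) : ℕ) : ℤ) =
          (n.descFactorial i1) * (descPochhammer ℤ j).eval ((n : ℤ) - i1) := by
        rw [show i1 + (i + j) - i = i1 + j from by omega, descFactorial_add' n i1 j,
          show ((n : ℤ) - i1) = (((n - i1 : ℕ)) : ℤ) from by omega,
          descPochhammer_eval_eq_descFactorial]
        push_cast; ring
      rw [h2, h3]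
      rw [show i1 + (i + j) = i1 + i + j from by omega]
      rw [pow_add, pow_add]
      linear_combination ((N.choose i1 : ℤ) * (i1.choose i) * (-1) ^ i1 * (-1) ^ i * (-1) ^ j *
        ((n - i1).descFactorial (N - i1)) * (Nat.factorial i) * (n.descFactorial i1) *
        (descPochhammer ℤ ((N - i) - j)).eval (((n : ℤ) - i) - j) *
        (descPochhammer ℤ j).eval ((n : ℤ) - i1)) * h1
    rw [Finset.sum_congr rfl step, ← Finset.mul_sum, key (N - i) ((n : ℤ) - i1) ((n : ℤ) - i),
      show ((n : ℤ) - i) - ((n : ℤ) - i1) = (((i1 - i : ℕ)) : ℤ) from by omega,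
      descPochhammer_eval_eq_descFactorial]
  rw [Finset.sum_congr rfl inner]
  rw [Finset.sum_eq_single_of_mem N (Finset.mem_Icc.mpr ⟨hiN, le_refl N⟩)
    (fun b hb hbN => by
      rw [Finset.mem_Icc] at hb
      rw [Nat.descFactorial_of_lt (show b - i < N - i by omega)]
      simp)]
  rw [Nat.choose_self, Nat.sub_self, Nat.descFactorial_zero, Nat.descFactorial_self]
  have hfac : ((N.choose i : ℤ) * (Nat.factorial i) * (Nat.factorial (N - i))) =
      (Nat.factorial N : ℤ) := by
    exact_mod_cast congrArg (Nat.cast : ℕ → ℤ)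
      (Nat.choose_mul_factorial_mul_factorial hiN)
  have hsign : ((-1 : ℤ)) ^ N * (-1) ^ i = (-1) ^ (N - i) := by
    rw [← pow_add, show N + i = (N - i) + 2 * i from by omega, pow_add, pow_mul]
    simp
  rw [← hsign, ← hfac]
  push_cast
  ring
end

section
/- For natural numbers N, i1, i2 with i1 ≤ N and i2 ≤ N, the sum over i of (i1 choose i)·(i2 choose i)·i!·f(i), when f(i) = λ^(-i)·S_i for arbitrary nonzero real λ and arbitrary real values S_i, combined with the alternating coefficients, satisfies: Σ_{i1, i2, i} (N choose i1)(N choose i2)(i1 choose i)(i2 choose i)·i!·(-1)^(2N - i1 - i2)·λ^(-i)·S_i = N!·λ^(-N)·S_N. -/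
open Finset

lemma alt_sum (m : ℕ) : ∑ k ∈ Finset.range (m+1), (m.choose k : ℝ) * (-1)^(m-k)
    = if m = 0 then 1 else 0 := by
  have h := Int.alternating_sum_range_choose (n := m)
  have h' : (∑ k ∈ Finset.range (m + 1), ((-1 : ℝ) ^ k * m.choose k)) = if m = 0 then 1 else 0 := by
    have := congrArg (fun z : ℤ => (z : ℝ)) h
    push_cast at this
    simpa using this
  calc ∑ k ∈ Finset.range (m+1), (m.choose k : ℝ) * (-1)^(m-k)
      = (-1)^m * ∑ k ∈ Finset.range (m+1), ((-1:ℝ)^k * m.choose k) := by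
        rw [Finset.mul_sum]
        refine Finset.sum_congr rfl fun k hk => ?_
        have hk' : k ≤ m := Nat.lt_succ_iff.mp (Finset.mem_range.mp hk)
        have h1 : (-1:ℝ)^(m-k) * (-1)^k = (-1)^m := by
          rw [← pow_add, Nat.sub_add_cancel hk']
        have hk2 : ((-1:ℝ))^k * (-1)^k = 1 := by
          rw [← pow_add, ← two_mul]; simp [pow_mul]
        have h2 : (-1:ℝ)^(m-k) = (-1)^m * (-1)^k := by
          calc (-1:ℝ)^(m-k) = (-1)^(m-k) * ((-1)^k * (-1)^k) := by rw [hk2, mul_one]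
            _ = (-1)^m * (-1)^k := by rw [← mul_assoc, h1]
        rw [h2]; ring
    _ = if m = 0 then 1 else 0 := by rw [h']; split <;> simp_all

lemma key_s4 (N i : ℕ) :
    ∑ j ∈ Finset.range (N+1), (N.choose j : ℝ) * (j.choose i) * (-1)^(N-j)
    = if i = N then 1 else 0 := by
  by_cases hi : i ≤ N
  · have hsub : Finset.Ico i (N+1) ⊆ Finset.range (N+1) := by
      intro x hx; simp only [Finset.mem_Ico] at hx; simp only [Finset.mem_range]; omega
    rw [← Finset.sum_subset hsub (by
      intro x hx hx'
      simp only [Finset.mem_range] at hx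
      simp only [Finset.mem_Ico] at hx'
      have : x < i := by omega
      simp [Nat.choose_eq_zero_of_lt this])]
    rw [Finset.sum_Ico_eq_sum_range]
    have hlen : N + 1 - i = (N - i) + 1 := by omega
    rw [hlen]
    have hcong : ∀ k ∈ Finset.range (N - i + 1),
        ((N.choose (i+k)) : ℝ) * ((i+k).choose i) * (-1)^(N-(i+k))
        = (N.choose i : ℝ) * (((N-i).choose k : ℝ) * (-1)^((N-i)-k)) := by
      intro k hk
      simp only [Finset.mem_range] at hk
      have h1 : i + k ≤ N := by omega
      have h2 : (N.choose (i+k)) * ((i+k).choose i) = N.choose i * ((N-i).choose k) := by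
        simpa [Nat.add_sub_cancel_left] using Nat.choose_mul (n := N) (Nat.le_add_right i k)
      have h3 : N - (i+k) = (N-i) - k := by omega
      have h2' : (N.choose (i+k) : ℝ) * ((i+k).choose i)
          = (N.choose i : ℝ) * ((N-i).choose k) := by exact_mod_cast h2
      rw [h3, ← mul_assoc, ← h2']
    rw [Finset.sum_congr rfl hcong, ← Finset.mul_sum, alt_sum]
    by_cases h : i = N <;> simp [h] <;> omega
  · have hz : ∀ j ∈ Finset.range (N+1), (N.choose j : ℝ) * (j.choose i) * (-1)^(N-j) = 0 := by
      intro j hj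
      simp only [Finset.mem_range] at hj
      have : j < i := by omega
      simp [Nat.choose_eq_zero_of_lt this]
    rw [Finset.sum_congr rfl hz]
    rw [Finset.sum_const_zero, if_neg (by omega)]

theorem stmt_4 (N : ℕ) (lam : ℝ) (hlam : lam ≠ 0) (S : ℕ → ℝ) :
    ∑ i1 ∈ Finset.range (N + 1), ∑ i2 ∈ Finset.range (N + 1),
      ∑ i ∈ Finset.range (N + 1),
        (N.choose i1 : ℝ) * (N.choose i2) * (i1.choose i) * (i2.choose i) *
          (Nat.factorial i) * (-1) ^ (2 * N - i1 - i2) * lam⁻¹ ^ i * S i =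
    (N.factorial : ℝ) * lam⁻¹ ^ N * S N := by
  have step1 : ∑ i1 ∈ Finset.range (N + 1), ∑ i2 ∈ Finset.range (N + 1),
      ∑ i ∈ Finset.range (N + 1),
        (N.choose i1 : ℝ) * (N.choose i2) * (i1.choose i) * (i2.choose i) *
          (Nat.factorial i) * (-1) ^ (2 * N - i1 - i2) * lam⁻¹ ^ i * S i
      = ∑ i1 ∈ Finset.range (N + 1), ∑ i ∈ Finset.range (N + 1),
          ∑ i2 ∈ Finset.range (N + 1),
        (N.choose i1 : ℝ) * (N.choose i2) * (i1.choose i) * (i2.choose i) *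
          (Nat.factorial i) * (-1) ^ (2 * N - i1 - i2) * lam⁻¹ ^ i * S i :=
    Finset.sum_congr rfl fun i1 _ => Finset.sum_comm
  rw [step1, Finset.sum_comm]
  have hswap : ∀ i ∈ Finset.range (N+1),
      (∑ i1 ∈ Finset.range (N + 1), ∑ i2 ∈ Finset.range (N + 1),
        (N.choose i1 : ℝ) * (N.choose i2) * (i1.choose i) * (i2.choose i) *
          (Nat.factorial i) * (-1) ^ (2 * N - i1 - i2) * lam⁻¹ ^ i * S i)
      = ((Nat.factorial i : ℝ) * lam⁻¹ ^ i * S i) *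
          ((∑ i1 ∈ Finset.range (N+1), (N.choose i1 : ℝ) * (i1.choose i) * (-1)^(N-i1)) *
           (∑ i2 ∈ Finset.range (N+1), (N.choose i2 : ℝ) * (i2.choose i) * (-1)^(N-i2))) := by
    intro i hi
    rw [Finset.sum_mul_sum, Finset.mul_sum]
    refine Finset.sum_congr rfl fun i1 h1 => ?_
    rw [Finset.mul_sum]
    refine Finset.sum_congr rfl fun i2 h2 => ?_
    simp only [Finset.mem_range] at h1 h2
    have he : 2 * N - i1 - i2 = (N - i1) + (N - i2) := by omega
    rw [he, pow_add]
    ring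
  rw [Finset.sum_congr rfl hswap]
  have hite : ∀ i ∈ Finset.range (N+1), ((Nat.factorial i : ℝ) * lam⁻¹ ^ i * S i) *
          ((∑ i1 ∈ Finset.range (N+1), (N.choose i1 : ℝ) * (i1.choose i) * (-1)^(N-i1)) *
           (∑ i2 ∈ Finset.range (N+1), (N.choose i2 : ℝ) * (i2.choose i) * (-1)^(N-i2)))
      = if i = N then (N.factorial : ℝ) * lam⁻¹ ^ N * S N else 0 := by
    intro i hi
    rw [key_s4]
    by_cases h : i = N <;> simp [h]
  rw [Finset.sum_congr rfl hite, Finset.sum_ite_eq' (Finset.range (N+1)) N]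
  simp
end
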